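/- arXiv:2207.12805 — 3 statements merged into one kernel-verified Lean document; each statement's English description precedes it below -/
import Mathlib

section
/- Let G be a bipartite graph with parts A and B, |A| = K and |B| = b, in which every vertex of B has degree at least K/2 and K/2 < b. Then there exists a matching in G of size at least K/8. -/
/-!
Every vertex of `B` has at least `K/2 ≥ ⌈K/8⌉` neighbours, so any `⌈K/8⌉` vertices of `B` satisfy
Hall's condition and can be matched into `A`; the hypothesis `K/2 < b` guarantees that `B` has that
many vertices. Reading such a matching from the side of `A` gives the statement.
-/

open Finset Function

theorem Finset.exists_injective_mem_of_card_le {ι α : Type*} [Fintype ι] [DecidableEq α]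
    (t : ι → Finset α) (ht : ∀ i, Fintype.card ι ≤ #(t i)) :
    ∃ f : ι → α, Injective f ∧ ∀ i, f i ∈ t i := by
  refine (all_card_le_biUnion_card_iff_existsInjective' t).mp fun s => ?_
  rcases s.eq_empty_or_nonempty with rfl | ⟨i, hi⟩
  · simp
  · calc #s ≤ Fintype.card ι := card_le_univ s
      _ ≤ #(t i) := ht i
      _ ≤ #(s.biUnion t) := card_le_card (subset_biUnion_of_mem t hi)

theorem exists_injOn_mem_of_injective {ι α β : Type*} [Fintype ι] [Nonempty β]
    (N : β → Finset α) {f : ι → α} {p : ι → β} (hf : Injective f) (hp : Injective p)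
    (hfN : ∀ i, f i ∈ N (p i)) :
    ∃ (s : Finset α) (m : α → β), #s = Fintype.card ι ∧ Set.InjOn m s ∧ ∀ a ∈ s, a ∈ N (m a) := by
  set m : α → β := extend f p fun _ => Classical.arbitrary β
  have hm : ∀ i, m (f i) = p i := hf.extend_apply p _
  refine ⟨univ.map ⟨f, hf⟩, m, card_map _, ?_, ?_⟩
  · simp only [coe_map, Embedding.coeFn_mk, coe_univ, Set.image_univ]
    rintro _ ⟨i, rfl⟩ _ ⟨j, rfl⟩ hij
    rw [hm, hm] at hij
    rw [hp hij]
  · simp only [mem_map, mem_univ, Embedding.coeFn_mk, true_and]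
    rintro _ ⟨i, rfl⟩
    simpa [hm] using hfN i

/-- In a bipartite graph with parts `A` (size `K`) and `B` (size `b`) where every vertex of `B`
has at least `K/2` neighbors and `K/2 < b`, there exists a matching of size at least `K/8`. -/
theorem stmt9 {A B : Type*} [Fintype A] [Fintype B] [DecidableEq A]
    (N : B → Finset A)
    (hdeg : ∀ v : B, (Fintype.card A : ℝ) / 2 ≤ ((N v).card : ℝ))
    (hKb : (Fintype.card A : ℝ) / 2 < (Fintype.card B : ℝ)) :
    ∃ (s : Finset A) (m : A → B), (Fintype.card A : ℝ) / 8 ≤ (s.card : ℝ) ∧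
      Set.InjOn m s ∧ ∀ a ∈ s, a ∈ N (m a) := by
  set c := ⌈(Fintype.card A : ℝ) / 8⌉₊
  have hA : (0 : ℝ) ≤ Fintype.card A := Nat.cast_nonneg _
  have hcB : c ≤ Fintype.card B := Nat.ceil_le.mpr (by linarith)
  have hcN : ∀ v, c ≤ #(N v) := fun v => Nat.ceil_le.mpr (by linarith [hdeg v])
  have : Nonempty B := Fintype.card_pos_iff.mp (by
    exact_mod_cast (by linarith : (0 : ℝ) < Fintype.card B))
  obtain ⟨p⟩ : Nonempty (Fin c ↪ B) :=
    Function.Embedding.nonempty_of_card_le (by rwa [Fintype.card_fin])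
  obtain ⟨f, hf, hfN⟩ := exists_injective_mem_of_card_le (fun i => N (p i))
    fun i => by rw [Fintype.card_fin]; exact hcN (p i)
  obtain ⟨s, m, hs, hm, hsN⟩ := exists_injOn_mem_of_injective N hf p.injective hfN
  refine ⟨s, m, ?_, hm, hsN⟩
  rw [hs, Fintype.card_fin]
  exact Nat.le_ceil _
end

section
/- Suppose y★ : A → ℝ satisfies ‖y★ − ỹ★‖_∞ ≤ ω where ỹ★ ∈ F, and at round t the function f̃_t maximizes max_{B ⊆ U_t, |B| = b} Σ_{a∈B} f(a) over all f ∈ F with Σ_{(a,y)∈D_t} (f(a) − y)² ≤ γ_t, where γ_t ≥ (t−1)·b·ω². Then Σ_{a ∈ B★} y★(a) ≤ b·ω + Σ_{a ∈ B_t} f̃_t(a), where B★ is the subset of U_t of size b maximizing Σ_{a∈B} y★(a) and B_t is the batch of size b maximizing Σ_{a∈B} f̃_t(a). -/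
/-! The misspecified reference `ỹ★` has squared error at most `ω²` on each observation, so it is
feasible for the confidence set; optimism then bounds its value on `B★` by the value of `f̃` on
`B_t`, and on `B★` the functions `ỹ★` and `y★` differ by at most `b·ω` in total. -/

lemma Multiset.sum_map_sq_sub_le_card_mul {α : Type*} (D : Multiset α) {f g : α → ℝ} {ω : ℝ}
    (hfg : ∀ a ∈ D, |f a - g a| ≤ ω) :
    (D.map fun a => (f a - g a) ^ 2).sum ≤ Multiset.card D * ω ^ 2 := by
  have h := (D.map fun a => (f a - g a) ^ 2).sum_le_card_nsmul (ω ^ 2) <| by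
    simp only [Multiset.mem_map]
    rintro _ ⟨a, ha, rfl⟩
    exact sq_le_sq.mpr ((hfg a ha).trans (le_abs_self ω))
  rwa [Multiset.card_map, nsmul_eq_mul] at h

lemma Finset.sum_le_sum_add_card_mul {ι : Type*} (s : Finset ι) {f g : ι → ℝ} {ω : ℝ}
    (hfg : ∀ a ∈ s, f a - g a ≤ ω) : ∑ a ∈ s, f a ≤ ∑ a ∈ s, g a + s.card * ω := by
  have h := s.sum_le_card_nsmul (fun a => f a - g a) ω hfg
  rw [Finset.sum_sub_distrib, nsmul_eq_mul] at h
  linarith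

theorem stmt12_general {A : Type*}
    (F : Set (A → ℝ)) (ystar ytil : A → ℝ) (hytil : ytil ∈ F)
    (ω : ℝ) (hmis : ∀ a, |ystar a - ytil a| ≤ ω)
    (t b : ℕ) (ht : 1 ≤ t) (U : Finset A)
    (D : Multiset A) (hD : Multiset.card D = (t - 1) * b)
    (γ : ℝ) (hγ : ((t : ℝ) - 1) * b * ω ^ 2 ≤ γ)
    (ftil : A → ℝ)
    (Bt : Finset A)
    (hopt : ∀ f ∈ F, (D.map (fun a => (f a - ystar a) ^ 2)).sum ≤ γ →
      ∀ Bset ⊆ U, Bset.card = b → ∑ a ∈ Bset, f a ≤ ∑ a ∈ Bt, ftil a)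
    (Bstar : Finset A) (hBs : Bstar ⊆ U) (hBscard : Bstar.card = b) :
    ∑ a ∈ Bstar, ystar a ≤ (b : ℝ) * ω + ∑ a ∈ Bt, ftil a := by
  have hytil_feasible : (D.map fun a => (ytil a - ystar a) ^ 2).sum ≤ γ :=
    calc _ ≤ (Multiset.card D : ℝ) * ω ^ 2 :=
          D.sum_map_sq_sub_le_card_mul fun a _ => abs_sub_comm (ystar a) (ytil a) ▸ hmis a
      _ = ((t : ℝ) - 1) * b * ω ^ 2 := by rw [hD, Nat.cast_mul, Nat.cast_sub ht, Nat.cast_one]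
      _ ≤ γ := hγ
  have hoptimism := hopt ytil hytil hytil_feasible Bstar hBs hBscard
  have hmisspec := Bstar.sum_le_sum_add_card_mul fun a _ => (abs_le.mp (hmis a)).2
  rw [hBscard] at hmisspec
  linarith

/-- Optimism under misspecification: if `‖y★ − ỹ★‖∞ ≤ ω` with `ỹ★ ∈ F`, and `f̃` maximizes the
optimistic batch objective over the constraint set `{f ∈ F : Σ_{(a,y)∈D} (f a − y)² ≤ γ}` with
`γ ≥ (t−1)·b·ω²`, then `Σ_{a∈B★} y★ a ≤ b·ω + Σ_{a∈B_t} f̃ a`. -/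
theorem stmt12 {A : Type*} [DecidableEq A]
    (F : Set (A → ℝ)) (ystar ytil : A → ℝ) (hytil : ytil ∈ F)
    (ω : ℝ) (hω : 0 ≤ ω) (hmis : ∀ a, |ystar a - ytil a| ≤ ω)
    (t b : ℕ) (ht : 1 ≤ t) (U : Finset A) (hU : b ≤ U.card)
    (D : Multiset A) (hD : Multiset.card D = (t - 1) * b)
    (γ : ℝ) (hγ : ((t : ℝ) - 1) * b * ω ^ 2 ≤ γ)
    (ftil : A → ℝ) (hftil : ftil ∈ F)
    (hfeas : (D.map (fun a => (ftil a - ystar a) ^ 2)).sum ≤ γ)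
    (Bt : Finset A) (hBt : Bt ⊆ U) (hBtcard : Bt.card = b)
    (hBtmax : ∀ Bset ⊆ U, Bset.card = b → ∑ a ∈ Bset, ftil a ≤ ∑ a ∈ Bt, ftil a)
    (hopt : ∀ f ∈ F, (D.map (fun a => (f a - ystar a) ^ 2)).sum ≤ γ →
      ∀ Bset ⊆ U, Bset.card = b → ∑ a ∈ Bset, f a ≤ ∑ a ∈ Bt, ftil a)
    (Bstar : Finset A) (hBs : Bstar ⊆ U) (hBscard : Bstar.card = b)
    (hBsmax : ∀ Bset ⊆ U, Bset.card = b → ∑ a ∈ Bset, ystar a ≤ ∑ a ∈ Bstar, ystar a) :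
    ∑ a ∈ Bstar, ystar a ≤ (b : ℝ) * ω + ∑ a ∈ Bt, ftil a :=
  stmt12_general F ystar ytil hytil ω hmis t b ht U D hD γ hγ ftil Bt hopt Bstar hBs hBscard
end

section
/- Let K be a symmetric positive definite n×n matrix. The set function B ↦ log det(K[B,B]) (with value 0 on the empty set) is submodular on subsets of {1,…,n}: for all B ⊆ C ⊆ {1,…,n} and i ∉ C, log det(K[B∪{i},B∪{i}]) − log det(K[B,B]) ≥ log det(K[C∪{i},C∪{i}]) − log det(K[C,C]). -/
/-!
Write `u_B = e_i - K[B,B]⁻¹ K[B,i]`, extended by zero. Then `K u_B` vanishes on `B`, and the block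
determinant formula gives `det K[B ∪ {i}] = det K[B] · (u_Bᵀ K u_B)`, so the marginal gain at `B`
is `log (u_Bᵀ K u_B)`, the log of a Schur complement. For `B ⊆ C` the difference `u_B - u_C` is
supported on `C`, where `K u_C` vanishes, hence
`u_Bᵀ K u_B = u_Cᵀ K u_C + (u_B - u_C)ᵀ K (u_B - u_C) ≥ u_Cᵀ K u_C`.
-/

open Finset

namespace Matrix

variable {ι R : Type*}

abbrev principalSubmatrix (K : Matrix ι ι R) (B : Finset ι) : Matrix B B R :=
  K.submatrix Subtype.val Subtype.val

lemma dotProduct_extend_subtypeVal [Fintype ι] [CommSemiring R] (B : Finset ι) (f : ι → R)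
    (x : B → R) : f ⬝ᵥ Function.extend Subtype.val x 0 = (fun b : B => f b) ⬝ᵥ x := by
  rw [dotProduct, ← sum_subset (subset_univ B), ← sum_coe_sort]
  · simp [dotProduct]
  · intro j _ hj
    rw [Function.extend_apply' _ _ _ (by simpa using hj), Pi.zero_apply, mul_zero]

section CommRing

variable [CommRing R] [DecidableEq ι]

noncomputable def schurVec (K : Matrix ι ι R) (B : Finset ι) (i : ι) : ι → R :=
  Pi.single i 1 - Function.extend Subtype.val ((K.principalSubmatrix B)⁻¹ *ᵥ fun b : B => K b i) 0

variable {K : Matrix ι ι R} {B : Finset ι} {i j : ι}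

lemma schurVec_self (hi : i ∉ B) : schurVec K B i i = 1 := by
  simp [schurVec, Function.extend_apply' _ _ _ (by simpa using hi : ¬∃ b : B, (b : ι) = i)]

lemma schurVec_of_notMem_insert (hj : j ∉ insert i B) : schurVec K B i j = 0 := by
  rw [mem_insert, not_or] at hj
  simp [schurVec, Pi.single_eq_of_ne hj.1,
    Function.extend_apply' _ _ _ (by simpa using hj.2 : ¬∃ b : B, (b : ι) = j)]

variable [Fintype ι]

lemma mulVec_schurVec_apply (j : ι) :
    (K *ᵥ schurVec K B i) j =
      K j i - (fun b : B => K j b) ⬝ᵥ ((K.principalSubmatrix B)⁻¹ *ᵥ fun b : B => K b i) := by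
  rw [schurVec, mulVec_sub, Pi.sub_apply, mulVec_single_one]
  simp [mulVec, ← dotProduct_extend_subtypeVal]

lemma mulVec_schurVec_of_mem (hB : IsUnit (K.principalSubmatrix B).det) (hj : j ∈ B) :
    (K *ᵥ schurVec K B i) j = 0 := by
  have hinv : K.principalSubmatrix B *ᵥ ((K.principalSubmatrix B)⁻¹ *ᵥ fun b : B => K b i) =
      fun b : B => K b i := by
    rw [mulVec_mulVec, mul_nonsing_inv _ hB, one_mulVec]
  rw [mulVec_schurVec_apply, sub_eq_zero]
  exact (congrFun hinv ⟨j, hj⟩).symm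

lemma dotProduct_mulVec_schurVec (hB : IsUnit (K.principalSubmatrix B).det) (hi : i ∉ B) :
    schurVec K B i ⬝ᵥ K *ᵥ schurVec K B i = (K *ᵥ schurVec K B i) i := by
  rw [dotProduct, sum_eq_single i, schurVec_self hi, one_mul]
  · intro j _ hji
    by_cases hj : j ∈ B
    · rw [mulVec_schurVec_of_mem hB hj, mul_zero]
    · rw [schurVec_of_notMem_insert (by simp [hji, hj]), zero_mul]
  · simp

lemma det_principalSubmatrix_insert (hB : IsUnit (K.principalSubmatrix B).det) (hi : i ∉ B) :
    (K.principalSubmatrix (insert i B)).det =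
      (K.principalSubmatrix B).det * (K *ᵥ schurVec K B i) i := by
  let e : (insert i B : Finset ι) ≃ B ⊕ Unit :=
    (subtypeInsertEquivOption hi).trans (Equiv.optionEquivSumPUnit B)
  have hblocks : (K.principalSubmatrix (insert i B)).submatrix e.symm e.symm =
      fromBlocks (K.principalSubmatrix B) (replicateCol Unit fun b : B => K b i)
        (replicateRow Unit fun b : B => K i b) (of fun _ _ => K i i) := by
    ext (a | a) (b | b) <;> rfl
  let := (K.principalSubmatrix B).invertibleOfIsUnitDet hB
  rw [← det_submatrix_equiv_self e.symm, hblocks, det_fromBlocks₁₁, det_unique (n := Unit),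
    mulVec_schurVec_apply, invOf_eq_nonsing_inv, Matrix.mul_assoc, ← replicateCol_mulVec]
  rfl

end CommRing

lemma PosSemidef.dotProduct_mulVec_le_of_orthogonal [Fintype ι] {K : Matrix ι ι ℝ}
    (hK : K.PosSemidef) {u v : ι → ℝ} (h : (u - v) ⬝ᵥ K *ᵥ v = 0) :
    v ⬝ᵥ K *ᵥ v ≤ u ⬝ᵥ K *ᵥ u := by
  have hsymm : v ⬝ᵥ K *ᵥ (u - v) = (u - v) ⬝ᵥ K *ᵥ v := by
    rw [dotProduct_mulVec, ← mulVec_transpose, ← conjTranspose_eq_transpose_of_trivial,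
      hK.isHermitian.eq, dotProduct_comm]
  have hnonneg : 0 ≤ (u - v) ⬝ᵥ K *ᵥ (u - v) := by
    simpa using hK.dotProduct_mulVec_nonneg (u - v)
  have hexpand : u ⬝ᵥ K *ᵥ u =
      v ⬝ᵥ K *ᵥ v + 2 * ((u - v) ⬝ᵥ K *ᵥ v) + (u - v) ⬝ᵥ K *ᵥ (u - v) := by
    conv_lhs => rw [← add_sub_cancel v u]
    rw [mulVec_add, dotProduct_add, add_dotProduct, add_dotProduct, hsymm]
    ring
  linarith

lemma PosDef.isUnit_det_principalSubmatrix [DecidableEq ι] {K : Matrix ι ι ℝ} (hK : K.PosDef)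
    (B : Finset ι) :
    IsUnit (K.principalSubmatrix B).det :=
  (hK.submatrix Subtype.val_injective).det_pos.ne'.isUnit

section Real

variable [Fintype ι] [DecidableEq ι] {K : Matrix ι ι ℝ} {B C : Finset ι} {i : ι}

lemma dotProduct_mulVec_schurVec_pos (hK : K.PosDef) (hi : i ∉ B) :
    0 < schurVec K B i ⬝ᵥ K *ᵥ schurVec K B i := by
  have hne : schurVec K B i ≠ 0 := fun h => by simpa [h] using schurVec_self (K := K) hi
  simpa using hK.dotProduct_mulVec_pos hne

lemma dotProduct_mulVec_schurVec_le_of_subset (hK : K.PosDef) (hBC : B ⊆ C) (hi : i ∉ C) :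
    schurVec K C i ⬝ᵥ K *ᵥ schurVec K C i ≤ schurVec K B i ⬝ᵥ K *ᵥ schurVec K B i := by
  refine hK.posSemidef.dotProduct_mulVec_le_of_orthogonal (sum_eq_zero fun j _ => ?_)
  by_cases hjC : j ∈ C
  · rw [mulVec_schurVec_of_mem (hK.isUnit_det_principalSubmatrix C) hjC, mul_zero]
  by_cases hji : j = i
  · subst hji
    rw [Pi.sub_apply, schurVec_self (fun h => hi (hBC h)), schurVec_self hi, sub_self, zero_mul]
  · have hjB : j ∉ B := fun h => hjC (hBC h)
    rw [Pi.sub_apply, schurVec_of_notMem_insert (by simp [hji, hjB]),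
      schurVec_of_notMem_insert (by simp [hji, hjC]), sub_self, zero_mul]

lemma log_det_insert_sub_log_det (hK : K.PosDef) (hi : i ∉ B) :
    Real.log (K.principalSubmatrix (insert i B)).det - Real.log (K.principalSubmatrix B).det =
      Real.log (schurVec K B i ⬝ᵥ K *ᵥ schurVec K B i) := by
  have hB := hK.isUnit_det_principalSubmatrix B
  rw [det_principalSubmatrix_insert hB hi, ← dotProduct_mulVec_schurVec hB hi,
    Real.log_mul hB.ne_zero (dotProduct_mulVec_schurVec_pos hK hi).ne', add_sub_cancel_left]

end Real

end Matrix

/-- Submodularity of `B ↦ log det K[B,B]` for a symmetric positive definite matrix `K`: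
for `B ⊆ C` and `i ∉ C`, the marginal gain of adding `i` to `C` is at most that of adding
`i` to `B`. -/
theorem stmt19 (n : ℕ) (K : Matrix (Fin n) (Fin n) ℝ) (hK : K.PosDef)
    (B C : Finset (Fin n)) (hBC : B ⊆ C) (i : Fin n) (hi : i ∉ C) :
    Real.log (Matrix.of fun a b : (insert i C : Finset (Fin n)) => K a b).det
        - Real.log (Matrix.of fun a b : C => K a b).det
      ≤ Real.log (Matrix.of fun a b : (insert i B : Finset (Fin n)) => K a b).det
        - Real.log (Matrix.of fun a b : B => K a b).det := by
  change Real.log (K.principalSubmatrix (insert i C)).det - Real.log (K.principalSubmatrix C).det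
    ≤ Real.log (K.principalSubmatrix (insert i B)).det - Real.log (K.principalSubmatrix B).det
  rw [Matrix.log_det_insert_sub_log_det hK hi,
    Matrix.log_det_insert_sub_log_det hK fun h => hi (hBC h)]
  exact Real.log_le_log (Matrix.dotProduct_mulVec_schurVec_pos hK hi)
    (Matrix.dotProduct_mulVec_schurVec_le_of_subset hK hBC hi)
end
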